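/- arXiv:2504.01140 — 5 statements merged into one kernel-verified Lean document; each statement's English description precedes it below -/
import Mathlib

section
/- Suppose the link function Q satisfies (A1) g'(x) = g'(Q(x)) for all x ∈ 𝒳⁻, (A2) ω(x) + ω(Q(x)) ≥ 0 for all x ∈ 𝒳⁻, and (A3) ∫_{𝒳⁻} ω(x)(1 − Q'(x)) g'(x) dx = 0. Then the transformed weight function ω̃ is nonnegative everywhere on 𝒳, and ∫_{𝒳} ω(x) g'(x) dx = ∫_{𝒳 \ 𝒳⁻} ω̃(x) g'(x) dx. -/
open MeasureTheory Set

/-!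
Write `𝒳⁻ = {x ∈ 𝒳 | ω x < 0}`. By (A3), `∫_{𝒳⁻} ω g' = ∫_{𝒳⁻} ω Q' g'`; the change of
variables `y = Q x` together with (A1) and the definition of `ω̃` on `Q(𝒳⁻)` turns this into
`∫_{Q(𝒳⁻)} (ω̃ - ω) g'`. Since `ω̃ = ω` on `𝒳 \ 𝒳⁻` off `Q(𝒳⁻)`, this is
`∫_{𝒳 \ 𝒳⁻} (ω̃ - ω) g'`, and adding `∫_{𝒳 \ 𝒳⁻} ω g'` gives the claim. Nonnegativity of `ω̃`
is (A2) on `Q(𝒳⁻)` and immediate elsewhere.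
-/

theorem integral_image_eq_integral_abs_deriv_smul₀ {F : Type*} [NormedAddCommGroup F]
    [NormedSpace ℝ F] {s : Set ℝ} {f f' : ℝ → ℝ} (hs : NullMeasurableSet s)
    (hf' : ∀ x ∈ s, HasDerivWithinAt f (f' x) s x) (hf : InjOn f s) (g : ℝ → F) :
    ∫ x in f '' s, g x = ∫ x in s, |f' x| • g (f x) := by
  obtain ⟨t, hts, ht, ht_ae⟩ := hs.exists_measurable_subset_ae_eq
  -- `f` maps the null set `s \ t` to a null set, so `f '' t` and `f '' s` agree a.e.
  have himage : f '' t =ᵐ[volume] f '' s := by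
    refine ae_eq_set.2 ⟨by simp [sdiff_eq_empty.2 (image_mono hts)],
      measure_mono_null (t := f '' (s \ t)) ?_ ?_⟩
    · exact fun y ⟨⟨x, hx, hxy⟩, hy⟩ => ⟨x, ⟨hx, fun hxt => hy ⟨x, hxt, hxy⟩⟩, hxy⟩
    · exact addHaar_image_eq_zero_of_differentiableOn_of_addHaar_eq_zero volume
        (fun x hx => (hf' x hx.1).differentiableWithinAt.mono sdiff_subset) (ae_eq_set.1 ht_ae).2
  rw [← setIntegral_congr_set himage, ← setIntegral_congr_set ht_ae]
  exact integral_image_eq_integral_abs_deriv_smul ht (fun x hx => (hf' x (hts hx)).mono hts)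
    (hf.mono hts) g

theorem transformedWeight_nonneg
    (𝒳 : Set ℝ) (ω Q ωt : ℝ → ℝ)
    (hωt_link : ∀ x ∈ {x ∈ 𝒳 | ω x < 0}, ωt (Q x) = ω x + ω (Q x))
    (hωt_pos : ∀ x ∈ {x ∈ 𝒳 | 0 ≤ ω x} \ (Q '' {x ∈ 𝒳 | ω x < 0}), ωt x = ω x)
    (hωt_zero : ∀ x, x ∉ {x ∈ 𝒳 | 0 ≤ ω x} → ωt x = 0)
    (hA2 : ∀ x ∈ {x ∈ 𝒳 | ω x < 0}, 0 ≤ ω x + ω (Q x)) :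
    ∀ x, 0 ≤ ωt x := by
  intro x
  by_cases hxP : x ∈ {x ∈ 𝒳 | 0 ≤ ω x}
  · by_cases hxQ : x ∈ Q '' {x ∈ 𝒳 | ω x < 0}
    · obtain ⟨y, hy, rfl⟩ := hxQ
      exact hωt_link y hy ▸ hA2 y hy
    · exact hωt_pos x ⟨hxP, hxQ⟩ ▸ hxP.2
  · exact (hωt_zero x hxP).ge

theorem prop1_part1_general
    (𝒳 : Set ℝ) (h𝒳 : MeasurableSet 𝒳)
    (ω g' Q Q' ωt : ℝ → ℝ)
    (hωint : IntegrableOn ω 𝒳)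
    (hQdiff : ∀ x ∈ {x ∈ 𝒳 | ω x < 0}, HasDerivAt Q (Q' x) x)
    (hQ'pos : ∀ x ∈ {x ∈ 𝒳 | ω x < 0}, 0 < Q' x)
    (hQinj : Set.InjOn Q {x ∈ 𝒳 | ω x < 0})
    (hQmaps : Set.MapsTo Q {x ∈ 𝒳 | ω x < 0} {x ∈ 𝒳 | 0 ≤ ω x})
    -- defining properties of the transformed weights ω̃
    (hωt_link : ∀ x ∈ {x ∈ 𝒳 | ω x < 0}, ωt (Q x) = ω x + ω (Q x))
    (hωt_pos : ∀ x ∈ {x ∈ 𝒳 | 0 ≤ ω x} \ (Q '' {x ∈ 𝒳 | ω x < 0}), ωt x = ω x)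
    (hωt_zero : ∀ x, x ∉ {x ∈ 𝒳 | 0 ≤ ω x} → ωt x = 0)
    -- integrability assumptions
    (hint1 : IntegrableOn (fun x => ω x * g' x) 𝒳)
    (hint2 : IntegrableOn (fun x => ωt x * g' x) {x ∈ 𝒳 | 0 ≤ ω x})
    (hint3 : IntegrableOn (fun x => ω x * Q' x * g' x) {x ∈ 𝒳 | ω x < 0})
    -- (A1): g' matches at linked points
    (hA1 : ∀ x ∈ {x ∈ 𝒳 | ω x < 0}, g' x = g' (Q x))
    -- (A2): net weight is nonnegative
    (hA2 : ∀ x ∈ {x ∈ 𝒳 | ω x < 0}, 0 ≤ ω x + ω (Q x))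
    -- (A3): derivative condition on Q
    (hA3 : ∫ x in {x ∈ 𝒳 | ω x < 0}, ω x * (1 - Q' x) * g' x = 0) :
    (∀ x ∈ 𝒳, 0 ≤ ωt x) ∧
      ∫ x in 𝒳, ω x * g' x = ∫ x in 𝒳 \ {x ∈ 𝒳 | ω x < 0}, ωt x * g' x := by
  refine ⟨fun x _ => transformedWeight_nonneg 𝒳 ω Q ωt hωt_link hωt_pos hωt_zero hA2 x, ?_⟩
  set s := {x ∈ 𝒳 | ω x < 0}
  have hs𝒳 : s ⊆ 𝒳 := sep_subset _ _
  have hP : {x ∈ 𝒳 | 0 ≤ ω x} = 𝒳 \ s := by ext x; simp [s]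
  rw [hP] at hint2
  have hs : NullMeasurableSet s := by
    have := hωint.aestronglyMeasurable.nullMeasurableSet_lt (aestronglyMeasurable_const (b := 0))
    simpa [nullMeasurableSet_restrict h𝒳.nullMeasurableSet, ofPred_inter_eq_sep] using this
  have hA3' : ∫ x in s, ω x * g' x = ∫ x in s, ω x * Q' x * g' x := by
    rw [← sub_eq_zero, ← integral_sub (hint1.mono_set hs𝒳) hint3, ← hA3]
    congr 1 with x; ring
  have hcov : ∫ x in s, ω x * Q' x * g' x = ∫ y in Q '' s, ωt y * g' y - ω y * g' y := by
    rw [integral_image_eq_integral_abs_deriv_smul₀ hs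
      (fun x hx => (hQdiff x hx).hasDerivWithinAt) hQinj]
    refine setIntegral_congr_fun₀ hs fun x hx => ?_
    simp only [smul_eq_mul, hωt_link x hx, ← hA1 x hx, abs_of_pos (hQ'pos x hx)]
    ring
  have hloc : ∫ y in Q '' s, ωt y * g' y - ω y * g' y =
      ∫ y in 𝒳 \ s, ωt y * g' y - ω y * g' y := by
    refine (setIntegral_eq_of_subset_of_ae_sdiff_eq_zero (h𝒳.nullMeasurableSet.diff hs)
      (hP ▸ image_subset_iff.2 hQmaps) (ae_of_all _ fun y hy => ?_)).symm
    rw [hωt_pos y (hP ▸ hy), sub_self]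
  calc ∫ x in 𝒳, ω x * g' x
      = (∫ x in 𝒳 \ s, ω x * g' x) + ∫ x in s, ω x * Q' x * g' x := by
        rw [setIntegral_sdiff₀ hs hint1 hs𝒳, hA3']; ring
    _ = ∫ x in 𝒳 \ s, ωt x * g' x := by
        rw [hcov, hloc, integral_sub hint2 (hint1.mono_set sdiff_subset)]; ring

/-- Proposition 1(1) of Kitagawa–Wang–Xu: under (A1), (A2), (A3), the transformed
weights `ωt` are nonnegative on `𝒳` and the weighted-average estimand with the
original weights `ω` coincides with the one with transformed weights on `𝒳 \ 𝒳⁻`. -/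
theorem prop1_part1
    (𝒳 : Set ℝ) (h𝒳 : MeasurableSet 𝒳)
    (ω g g' Q Q' ωt : ℝ → ℝ)
    (hg : ∀ x, HasDerivAt g (g' x) x)
    (hωint : IntegrableOn ω 𝒳)
    (hQdiff : ∀ x ∈ {x ∈ 𝒳 | ω x < 0}, HasDerivAt Q (Q' x) x)
    (hQ'pos : ∀ x ∈ {x ∈ 𝒳 | ω x < 0}, 0 < Q' x)
    (hQinj : Set.InjOn Q {x ∈ 𝒳 | ω x < 0})
    (hQmaps : Set.MapsTo Q {x ∈ 𝒳 | ω x < 0} {x ∈ 𝒳 | 0 ≤ ω x})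
    -- defining properties of the transformed weights ω̃
    (hωt_link : ∀ x ∈ {x ∈ 𝒳 | ω x < 0}, ωt (Q x) = ω x + ω (Q x))
    (hωt_pos : ∀ x ∈ {x ∈ 𝒳 | 0 ≤ ω x} \ (Q '' {x ∈ 𝒳 | ω x < 0}), ωt x = ω x)
    (hωt_zero : ∀ x, x ∉ {x ∈ 𝒳 | 0 ≤ ω x} → ωt x = 0)
    -- integrability assumptions
    (hint1 : IntegrableOn (fun x => ω x * g' x) 𝒳)
    (hint2 : IntegrableOn (fun x => ωt x * g' x) {x ∈ 𝒳 | 0 ≤ ω x})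
    (hint3 : IntegrableOn (fun x => ω x * Q' x * g' x) {x ∈ 𝒳 | ω x < 0})
    -- (A1): g' matches at linked points
    (hA1 : ∀ x ∈ {x ∈ 𝒳 | ω x < 0}, g' x = g' (Q x))
    -- (A2): net weight is nonnegative
    (hA2 : ∀ x ∈ {x ∈ 𝒳 | ω x < 0}, 0 ≤ ω x + ω (Q x))
    -- (A3): derivative condition on Q
    (hA3 : ∫ x in {x ∈ 𝒳 | ω x < 0}, ω x * (1 - Q' x) * g' x = 0) :
    (∀ x ∈ 𝒳, 0 ≤ ωt x) ∧
      ∫ x in 𝒳, ω x * g' x = ∫ x in 𝒳 \ {x ∈ 𝒳 | ω x < 0}, ωt x * g' x :=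
  prop1_part1_general 𝒳 h𝒳 ω g' Q Q' ωt hωint hQdiff hQ'pos hQinj hQmaps hωt_link hωt_pos hωt_zero
    hint1 hint2 hint3 hA1 hA2 hA3
end

section
/- Suppose the link function Q satisfies (A1) g'(x) = g'(Q(x)) for all x ∈ 𝒳⁻, (A2) ω(x) + ω(Q(x)) ≥ 0 for all x ∈ 𝒳⁻, and (A3) ∫_{𝒳⁻} ω(x)(1 − Q'(x)) g'(x) dx = 0. If in addition g'(x) ≥ 0 for all x ∈ 𝒳, then the weighted-average estimand is nonnegative: ∫_{𝒳} ω(x) g'(x) dx ≥ 0, even though ω takes negative values on 𝒳⁻. -/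
open MeasureTheory Set Real

/-- Under (A1)–(A3) and nonnegativity of the marginal effect `g'` on `𝒳`,
the weighted-average estimand is nonnegative even though `ω` is negative on `𝒳⁻`. -/
theorem estimand_nonneg
    (𝒳 : Set ℝ) (h𝒳 : MeasurableSet 𝒳)
    (ω g g' Q Q' ωt : ℝ → ℝ)
    (hg : ∀ x, HasDerivAt g (g' x) x)
    (hωint : IntegrableOn ω 𝒳)
    (hQdiff : ∀ x ∈ {x ∈ 𝒳 | ω x < 0}, HasDerivAt Q (Q' x) x)
    (hQ'pos : ∀ x ∈ {x ∈ 𝒳 | ω x < 0}, 0 < Q' x)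
    (hQinj : Set.InjOn Q {x ∈ 𝒳 | ω x < 0})
    (hQmaps : Set.MapsTo Q {x ∈ 𝒳 | ω x < 0} {x ∈ 𝒳 | 0 ≤ ω x})
    -- defining properties of the transformed weights ω̃
    (hωt_link : ∀ x ∈ {x ∈ 𝒳 | ω x < 0}, ωt (Q x) = ω x + ω (Q x))
    (hωt_pos : ∀ x ∈ {x ∈ 𝒳 | 0 ≤ ω x} \ (Q '' {x ∈ 𝒳 | ω x < 0}), ωt x = ω x)
    (hωt_zero : ∀ x, x ∉ {x ∈ 𝒳 | 0 ≤ ω x} → ωt x = 0)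
    -- integrability assumptions
    (hint1 : IntegrableOn (fun x => ω x * g' x) 𝒳)
    (hint2 : IntegrableOn (fun x => ωt x * g' x) {x ∈ 𝒳 | 0 ≤ ω x})
    (hint3 : IntegrableOn (fun x => ω x * Q' x * g' x) {x ∈ 𝒳 | ω x < 0})
    -- (A1): g' matches at linked points
    (hA1 : ∀ x ∈ {x ∈ 𝒳 | ω x < 0}, g' x = g' (Q x))
    -- (A2): net weight is nonnegative
    (hA2 : ∀ x ∈ {x ∈ 𝒳 | ω x < 0}, 0 ≤ ω x + ω (Q x))
    -- (A3): derivative condition on Q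
    (hA3 : ∫ x in {x ∈ 𝒳 | ω x < 0}, ω x * (1 - Q' x) * g' x = 0)
    -- nonnegative marginal effects
    (hg'pos : ∀ x ∈ 𝒳, 0 ≤ g' x) :
    0 ≤ ∫ x in 𝒳, ω x * g' x := by
  set Xm := {x ∈ 𝒳 | ω x < 0} with hXm_def
  set Xp := {x ∈ 𝒳 | 0 ≤ ω x} with hXp_def
  -- measurable representative of ω
  obtain ⟨ω₀, hω₀sm, hωae⟩ := hωint.aestronglyMeasurable
  have hnull : volume ({x | ¬ ω x = ω₀ x} ∩ 𝒳) = 0 := by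
    have h := ae_iff.1 hωae
    rwa [Measure.restrict_apply' h𝒳] at h
  obtain ⟨N, hN0, hNmeas, hNnull⟩ := exists_measurable_superset_of_null hnull
  set s := (𝒳 ∩ {x | ω₀ x < 0}) \ N with hs_def
  have hs_meas : MeasurableSet s :=
    (h𝒳.inter (measurableSet_lt hω₀sm.measurable measurable_const)).diff hNmeas
  have hs_sub : s ⊆ Xm := by
    rintro x ⟨⟨hx𝒳, hx0⟩, hxN⟩
    have hωx : ω x = ω₀ x := by
      by_contra h
      exact hxN (hN0 ⟨h, hx𝒳⟩)
    exact ⟨hx𝒳, lt_of_eq_of_lt hωx hx0⟩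
  have hs𝒳 : s ⊆ 𝒳 := fun x hx => hx.1.1
  have hXm_sub : Xm \ s ⊆ N := by
    rintro x ⟨⟨hx𝒳, hxω⟩, hxs⟩
    by_contra hxN
    have hωx : ω x = ω₀ x := by
      by_contra h
      exact hxN (hN0 ⟨h, hx𝒳⟩)
    exact hxs ⟨⟨hx𝒳, lt_of_eq_of_lt hωx.symm hxω⟩, hxN⟩
  have hsXm_ae : s =ᵐ[volume] Xm := by
    rw [MeasureTheory.ae_eq_set]
    refine ⟨?_, measure_mono_null hXm_sub hNnull⟩
    rw [Set.diff_eq_empty.2 hs_sub]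
    exact measure_empty
  have h𝒳s_ae : (𝒳 \ s : Set ℝ) =ᵐ[volume] Xp := by
    rw [MeasureTheory.ae_eq_set]
    constructor
    · refine measure_mono_null ?_ hNnull
      rintro x ⟨⟨hx𝒳, hxs⟩, hxp⟩
      have hω : ω x < 0 := lt_of_not_ge fun hge => hxp ⟨hx𝒳, hge⟩
      exact hXm_sub ⟨⟨hx𝒳, hω⟩, hxs⟩
    · refine measure_mono_null (fun x hx => ?_) (measure_empty (μ := volume))
      obtain ⟨⟨hx𝒳, hxω⟩, hns⟩ := hx
      have hxs : x ∈ s := by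
        by_contra hc
        exact hns ⟨hx𝒳, hc⟩
      exact absurd hxω (not_le.2 (hs_sub hxs).2)
  -- basic integrabilities
  have hint1m : IntegrableOn (fun x => ω x * g' x) Xm :=
    hint1.mono_set (Set.sep_subset _ _)
  -- A3 reformulated
  have hA3' : ∫ x in Xm, ω x * g' x = ∫ x in Xm, ω x * Q' x * g' x := by
    have heq : (fun x => ω x * (1 - Q' x) * g' x)
        = fun x => ω x * g' x - ω x * Q' x * g' x := by
      funext x; ring
    rw [heq, integral_sub hint1m hint3] at hA3
    linarith
  -- image set facts
  have hQs_sub_Xp : Q '' s ⊆ Xp := by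
    rintro y ⟨x, hx, rfl⟩
    exact hQmaps (hs_sub hx)
  have hQs_meas : MeasurableSet (Q '' s) :=
    hs_meas.image_of_continuousOn_injOn
      (fun x hx => (hQdiff x (hs_sub hx)).continuousAt.continuousWithinAt)
      (hQinj.mono hs_sub)
  have hQs_sub : Q '' s ⊆ 𝒳 \ s := by
    intro y hy
    have hyp := hQs_sub_Xp hy
    refine ⟨hyp.1, fun hys => ?_⟩
    exact absurd hyp.2 (not_le.2 (hs_sub hys).2)
  -- change of variables
  have hCoV : ∫ x in Q '' s, (ωt x - ω x) * g' x = ∫ x in s, ω x * Q' x * g' x := by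
    rw [integral_image_eq_integral_abs_deriv_smul hs_meas
        (fun x hx => (hQdiff x (hs_sub hx)).hasDerivWithinAt) (hQinj.mono hs_sub)]
    refine setIntegral_congr_fun hs_meas (fun x hx => ?_)
    have hxm := hs_sub hx
    have h1 : |Q' x| = Q' x := abs_of_pos (hQ'pos x hxm)
    have h2 : ωt (Q x) = ω x + ω (Q x) := hωt_link x hxm
    have h3 : g' (Q x) = g' x := (hA1 x hxm).symm
    simp only [smul_eq_mul, h1, h2, h3]
    ring
  -- the image of the exceptional part is null
  have hM : volume (Q '' (Xm \ s)) = 0 :=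
    addHaar_image_eq_zero_of_differentiableOn_of_addHaar_eq_zero volume
      (fun x hx => (hQdiff x hx.1).differentiableAt.differentiableWithinAt)
      (measure_mono_null hXm_sub hNnull)
  -- the transformed integrand vanishes a.e. off the image
  have hzero : ∫ x in (𝒳 \ s) \ Q '' s, (ωt x - ω x) * g' x = 0 := by
    have hae : ∀ᵐ x ∂volume, x ∈ (𝒳 \ s) \ Q '' s → (ωt x - ω x) * g' x = 0 := by
      filter_upwards [compl_mem_ae_iff.2 hNnull, compl_mem_ae_iff.2 hM] with x hxN hxM hx
      have hx𝒳 : x ∈ 𝒳 := hx.1.1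
      have hxp : x ∈ Xp := by
        by_contra h
        have hω : ω x < 0 := lt_of_not_ge fun hge => h ⟨hx𝒳, hge⟩
        exact hxN (hXm_sub ⟨⟨hx𝒳, hω⟩, hx.1.2⟩)
      have hnotim : x ∉ Q '' Xm := by
        rintro ⟨y, hy, rfl⟩
        by_cases hys : y ∈ s
        · exact hx.2 ⟨y, hys, rfl⟩
        · exact hxM ⟨y, ⟨hy, hys⟩, rfl⟩
      rw [hωt_pos x ⟨hxp, hnotim⟩, sub_self, zero_mul]
    exact integral_eq_zero_of_ae
      ((ae_restrict_iff' ((h𝒳.diff hs_meas).diff hQs_meas)).2 hae)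
  -- integrabilities on 𝒳 \ s
  have hrestr : volume.restrict (𝒳 \ s) = volume.restrict Xp :=
    Measure.restrict_congr_set h𝒳s_ae
  have hint_t : IntegrableOn (fun x => ωt x * g' x) (𝒳 \ s) := by
    rw [IntegrableOn, hrestr]; exact hint2
  have hint_ω : IntegrableOn (fun x => ω x * g' x) (𝒳 \ s) :=
    hint1.mono_set Set.diff_subset
  have hint_d : IntegrableOn (fun x => (ωt x - ω x) * g' x) (𝒳 \ s) := by
    refine (hint_t.sub hint_ω).congr
      (Filter.Eventually.of_forall fun x => by simp only [Pi.sub_apply]; ring)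
  -- main identity: ∫_𝒳 ω g' = ∫_{Xp} ωt g'
  have hmain : ∫ x in 𝒳, ω x * g' x = ∫ x in Xp, ωt x * g' x := by
    have hsplit : ∫ x in 𝒳, ω x * g' x
        = (∫ x in s, ω x * g' x) + ∫ x in 𝒳 \ s, ω x * g' x := by
      rw [← integral_inter_add_diff hs_meas hint1,
        Set.inter_eq_self_of_subset_right hs𝒳]
    have himg : ∫ x in 𝒳 \ s, (ωt x - ω x) * g' x
        = ∫ x in Q '' s, (ωt x - ω x) * g' x := by
      rw [← integral_inter_add_diff hQs_meas hint_d,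
        Set.inter_eq_self_of_subset_right hQs_sub, hzero, add_zero]
    have hXp_eq : ∫ x in Xp, ωt x * g' x
        = (∫ x in 𝒳 \ s, (ωt x - ω x) * g' x) + ∫ x in 𝒳 \ s, ω x * g' x := by
      rw [← integral_add hint_d hint_ω, setIntegral_congr_set h𝒳s_ae.symm]
      refine setIntegral_congr_fun (h𝒳.diff hs_meas) (fun x _ => by ring)
    rw [hsplit, hXp_eq, himg, hCoV]
    congr 1
    rw [setIntegral_congr_set hsXm_ae, hA3']
    exact (setIntegral_congr_set hsXm_ae).symm
  rw [hmain]
  -- nonnegativity of ∫_{Xp} ωt g'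
  rw [← setIntegral_congr_set h𝒳s_ae]
  refine setIntegral_nonneg_ae (h𝒳.diff hs_meas) ?_
  filter_upwards [compl_mem_ae_iff.2 hNnull] with x hxN hx
  have hx𝒳 : x ∈ 𝒳 := hx.1
  have hxp : x ∈ Xp := by
    by_contra h
    have hω : ω x < 0 := lt_of_not_ge fun hge => h ⟨hx𝒳, hge⟩
    exact hxN (hXm_sub ⟨⟨hx𝒳, hω⟩, hx.2⟩)
  have hωt : 0 ≤ ωt x := by
    by_cases him : x ∈ Q '' Xm
    · obtain ⟨y, hy, rfl⟩ := him
      rw [hωt_link y hy]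
      exact hA2 y hy
    · rw [hωt_pos x ⟨hxp, him⟩]
      exact hxp.2
  exact mul_nonneg hωt (hg'pos x hx𝒳)
end

section
/- Let f : 𝒳 → ℝ be Borel measurable with finite range, and assume Leb(f₊⁻¹({y})) > 0 for every y ∈ 𝒴⁻. Then the spread-out negative weights integrate to the original negative-region integral: ∫_{𝒳ₘ⁺} [ (∫_{f₋⁻¹({f(x)})} ω(v) f(v) dv) / Leb(f₊⁻¹({f(x)})) ] dx = ∫_{𝒳⁻} ω(x) f(x) dx. -/
/-!
Both sides split along the finitely many values `y` that `f` takes on `𝒳⁻`. On the positive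
part `f₊⁻¹({y})` of a fibre the integrand is the constant `(∫_{f₋⁻¹({y})} ω f) / Leb(f₊⁻¹({y}))`,
so integrating it over that fibre (of positive finite measure) returns `∫_{f₋⁻¹({y})} ω f`;
summing over `y` reassembles `∫_{𝒳⁻} ω f`.
-/

open MeasureTheory Set

section FiberDecomposition

variable {α β E : Type*} [MeasurableSpace α] [MeasurableSpace β] [MeasurableSingletonClass β]
  [NormedAddCommGroup E] [NormedSpace ℝ E] {μ : Measure α} {f : α → β}

theorem setIntegral_eq_sum_fibers {g : α → E} {s : Set α} (hf : Measurable f)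
    (hs : MeasurableSet s) {Y : Finset β} (hY : MapsTo f s Y)
    (hg : ∀ y ∈ Y, IntegrableOn g (f ⁻¹' {y} ∩ s) μ) :
    ∫ x in s, g x ∂μ = ∑ y ∈ Y, ∫ x in f ⁻¹' {y} ∩ s, g x ∂μ := by
  have hcover : s = ⋃ y ∈ Y, f ⁻¹' {y} ∩ s := by
    ext x
    simp only [mem_iUnion, mem_inter_iff, mem_preimage, mem_singleton_iff, exists_prop]
    exact ⟨fun hx => ⟨f x, hY hx, rfl, hx⟩, fun ⟨_, _, _, hx⟩ => hx⟩
  conv_lhs => rw [hcover]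
  exact integral_biUnion_finset Y (fun y _ => (hf (measurableSet_singleton y)).inter hs)
    (fun _ _ _ _ hyz => (pairwise_disjoint_fiber f hyz).mono inter_subset_left inter_subset_left)
    hg

theorem setIntegral_div_measureReal_self {s : Set α} (hs₀ : μ s ≠ 0) (hs : μ s ≠ ⊤) (c : ℝ) :
    ∫ _ in s, c / μ.real s ∂μ = c := by
  have hpos : 0 < μ.real s := ENNReal.toReal_pos hs₀ hs
  rw [setIntegral_const, smul_eq_mul, mul_div_cancel₀ c hpos.ne']

theorem setIntegral_spread_over_fibers {h : α → ℝ} {P N : Set α} (hf : Measurable f)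
    (hP : MeasurableSet P) (hN : MeasurableSet N) (hfin : (f '' N).Finite)
    (hh : IntegrableOn h N μ)
    (hP₀ : ∀ y ∈ f '' N, μ (f ⁻¹' {y} ∩ P) ≠ 0)
    (hP_top : ∀ y ∈ f '' N, μ (f ⁻¹' {y} ∩ P) ≠ ⊤) :
    ∫ x in {x ∈ P | ∃ z ∈ N, f z = f x},
        (∫ v in f ⁻¹' {f x} ∩ N, h v ∂μ) / (μ (f ⁻¹' {f x} ∩ P)).toReal ∂μ
      = ∫ x in N, h x ∂μ := by
  set Y := hfin.toFinset
  have hM : {x ∈ P | ∃ z ∈ N, f z = f x} = P ∩ f ⁻¹' (f '' N) := by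
    ext x
    simp only [mem_ofPred_eq, mem_inter_iff, mem_preimage, mem_image]
  have hfiber : ∀ y ∈ Y, f ⁻¹' {y} ∩ (P ∩ f ⁻¹' (f '' N)) = f ⁻¹' {y} ∩ P := by
    intro y hy
    ext x
    simp only [mem_inter_iff, mem_preimage, mem_singleton_iff]
    constructor
    · exact fun ⟨hx, hxP, _⟩ => ⟨hx, hxP⟩
    · rintro ⟨rfl, hxP⟩
      exact ⟨rfl, hxP, hfin.mem_toFinset.1 hy⟩
  have hconst : ∀ y, EqOn (fun x => (∫ v in f ⁻¹' {f x} ∩ N, h v ∂μ) /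
      (μ (f ⁻¹' {f x} ∩ P)).toReal) (fun _ => (∫ v in f ⁻¹' {y} ∩ N, h v ∂μ) /
      μ.real (f ⁻¹' {y} ∩ P)) (f ⁻¹' {y} ∩ P) := by
    rintro y x ⟨rfl : f x = y, -⟩
    rfl
  have hPy : ∀ y, MeasurableSet (f ⁻¹' {y} ∩ P) :=
    fun y => (hf (measurableSet_singleton y)).inter hP
  have hNmaps : MapsTo f N Y := fun x hx => hfin.mem_toFinset.2 (mem_image_of_mem f hx)
  rw [hM, setIntegral_eq_sum_fibers hf (hP.inter (hf hfin.measurableSet))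
      (fun x hx => hfin.mem_toFinset.2 hx.2) ?integrable,
    setIntegral_eq_sum_fibers hf hN hNmaps (fun y _ => hh.mono_set inter_subset_right)]
  case integrable =>
    intro y hy
    rw [hfiber y hy, integrableOn_congr_fun (hconst y) (hPy y)]
    exact integrableOn_const (hP_top y (hfin.mem_toFinset.1 hy))
  refine Finset.sum_congr rfl fun y hy => ?_
  have hyN := hfin.mem_toFinset.1 hy
  rw [hfiber y hy, setIntegral_congr_fun (hPy y) (hconst y),
    setIntegral_div_measureReal_self (hP₀ y hyN) (hP_top y hyN)]

end FiberDecomposition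

/-- For a finite-range measurable `f` with `Leb(f₊⁻¹({y})) > 0` for every
`y ∈ 𝒴⁻`, the spread-out negative weights integrate to the original
negative-region integral:
`∫_{𝒳ₘ⁺} (∫_{f₋⁻¹({f(x)})} ω f) / Leb(f₊⁻¹({f(x)})) dx = ∫_{𝒳⁻} ω f`. -/
theorem spread_negative_weights
    (𝒳 : Set ℝ) (h𝒳 : IsCompact 𝒳) (ω f : ℝ → ℝ)
    (hω : ContinuousOn ω 𝒳) (hf : Measurable f)
    (hfin : (f '' 𝒳).Finite)
    (hLeb : ∀ y ∈ f '' {x ∈ 𝒳 | ω x < 0},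
      0 < volume (f ⁻¹' {y} ∩ {x ∈ 𝒳 | 0 ≤ ω x})) :
    ∫ x in {x ∈ {x ∈ 𝒳 | 0 ≤ ω x} | ∃ z ∈ {x ∈ 𝒳 | ω x < 0}, f z = f x},
        (∫ v in f ⁻¹' {f x} ∩ {x ∈ 𝒳 | ω x < 0}, ω v * f v)
          / (volume (f ⁻¹' {f x} ∩ {x ∈ 𝒳 | 0 ≤ ω x})).toReal
      = ∫ x in {x ∈ 𝒳 | ω x < 0}, ω x * f x := by
  have hXp : MeasurableSet {x ∈ 𝒳 | 0 ≤ ω x} :=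
    (hω.preimage_isClosed_of_isClosed h𝒳.isClosed isClosed_Ici).measurableSet
  have hXn : {x ∈ 𝒳 | ω x < 0} = 𝒳 \ {x ∈ 𝒳 | 0 ≤ ω x} := by
    ext x
    simp only [mem_ofPred_eq, mem_sdiff, not_and, not_le]
    exact ⟨fun ⟨hx, hneg⟩ => ⟨hx, fun _ => hneg⟩, fun ⟨hx, hneg⟩ => ⟨hx, hneg hx⟩⟩
  have hXnsub : {x ∈ 𝒳 | ω x < 0} ⊆ 𝒳 := sep_subset _ _
  obtain ⟨C, hC⟩ := isBounded_iff_forall_norm_le.1 hfin.isBounded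
  have hfint : IntegrableOn f 𝒳 :=
    Measure.integrableOn_of_bounded h𝒳.measure_lt_top.ne hf.aestronglyMeasurable
      ((ae_restrict_mem h𝒳.isClosed.measurableSet).mono fun x hx => hC _ (mem_image_of_mem f hx))
  have hfiber_top : ∀ y, volume (f ⁻¹' {y} ∩ {x ∈ 𝒳 | 0 ≤ ω x}) ≠ ⊤ := fun y =>
    ((measure_mono (inter_subset_right.trans (sep_subset _ _))).trans_lt h𝒳.measure_lt_top).ne
  exact setIntegral_spread_over_fibers hf hXp (hXn ▸ h𝒳.isClosed.measurableSet.diff hXp)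
    (hfin.subset (image_mono hXnsub)) ((IntegrableOn.continuousOn_mul hω hfint h𝒳).mono_set hXnsub)
    (fun y hy => (hLeb y hy).ne') fun y _ => hfiber_top y
end

section
/- Let f : 𝒳 → ℝ be Borel measurable with finite range, assume Leb(f₊⁻¹({y})) > 0 for every y ∈ 𝒴⁻, and assume the measure dominance condition: −∫_{f₋⁻¹({y})} ω(v) dv ≤ ∫_{f₊⁻¹({y})} ω(v) dv for every y ∈ 𝒴⁻. Define the transformed weight function ω̃ : 𝒳 → ℝ by ω̃(x) = ω(x) for x ∈ 𝒳⁺ \ 𝒳ₘ⁺, ω̃(x) = [∫_{f₊⁻¹({f(x)})} ω(v) dv + ∫_{f₋⁻¹({f(x)})} ω(v) dv] / Leb(f₊⁻¹({f(x)})) for x ∈ 𝒳ₘ⁺, and ω̃(x) = 0 for x ∈ 𝒳⁻. Then (i) ∫_{𝒳} ω(x) f(x) dx = ∫_{𝒳} ω̃(x) f(x) dx, and (ii) ω̃(x) ≥ 0 for all x ∈ 𝒳. -/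
open MeasureTheory Set

/-! On a level set `{f = y}` the factor `f` is the constant `y`, so both integrals are finite sums
of `y` times the integral of the weight over `{f = y}`, and it suffices to compare these fiber
integrals. On a level set meeting `𝒳⁻`, `ω̃` spreads the total mass of `ω` on it uniformly over
its nonnegative part (which has positive measure) and vanishes on its negative part, so the mass
is unchanged; on every other level set `ω̃ = ω`. The spread mass is nonnegative precisely by the
dominance condition. -/

section SignSplit

variable {α β : Type*} [LinearOrder β] {s : Set α} {ω : α → β} {a : β}

theorem sep_le_union_sep_lt : {x ∈ s | a ≤ ω x} ∪ {x ∈ s | ω x < a} = s := by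
  ext x
  simp only [mem_union, mem_sep_iff, ← and_or_left, le_or_gt, and_true]

theorem disjoint_sep_le_sep_lt : Disjoint {x ∈ s | a ≤ ω x} {x ∈ s | ω x < a} :=
  disjoint_left.mpr fun _ hle hlt => (not_lt.mpr hle.2) hlt.2

theorem ContinuousOn.measurableSet_sep_le_and_sep_lt [MeasurableSpace α] [TopologicalSpace α]
    [OpensMeasurableSpace α] [TopologicalSpace β] [OrderClosedTopology β]
    (hω : ContinuousOn ω s) (hs : IsClosed s) :
    MeasurableSet {x ∈ s | a ≤ ω x} ∧ MeasurableSet {x ∈ s | ω x < a} := by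
  have hle : MeasurableSet {x ∈ s | a ≤ ω x} :=
    (hω.preimage_isClosed_of_isClosed hs isClosed_Ici).measurableSet
  refine ⟨hle, ?_⟩
  rw [← disjoint_sep_le_sep_lt.symm.sdiff_eq_left, ← union_sdiff_left, sep_le_union_sep_lt]
  exact hs.measurableSet.diff hle

end SignSplit

section LevelSets

variable {α : Type*} [MeasurableSpace α] {μ : Measure α} {s : Set α}

theorem setIntegral_eq_sum_fiber {β E : Type*} [MeasurableSpace β] [MeasurableSingletonClass β]
    [NormedAddCommGroup E] [NormedSpace ℝ E] {f : α → β} (hf : Measurable f)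
    (hs : MeasurableSet s) (hfin : (f '' s).Finite) {g : α → E}
    (hg : ∀ y ∈ f '' s, IntegrableOn g (f ⁻¹' {y} ∩ s) μ) :
    ∫ x in s, g x ∂μ = ∑ y ∈ hfin.toFinset, ∫ x in f ⁻¹' {y} ∩ s, g x ∂μ := by
  have hcover : s = ⋃ y ∈ hfin.toFinset, f ⁻¹' {y} ∩ s := by
    ext x
    simp only [Finite.mem_toFinset, mem_iUnion, mem_inter_iff, mem_preimage, mem_singleton_iff,
      exists_prop]
    exact ⟨fun hx => ⟨f x, mem_image_of_mem f hx, rfl, hx⟩, fun ⟨_, _, _, hx⟩ => hx⟩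
  conv_lhs => rw [hcover]
  refine integral_biUnion_finset _ (fun y _ => (hf (measurableSet_singleton y)).inter hs)
    (fun y _ y' _ hne => ?_) (fun y hy => hg y (hfin.mem_toFinset.mp hy))
  exact ((disjoint_singleton.mpr hne).preimage f).mono inter_subset_left inter_subset_left

theorem setIntegral_mul_eq_sum_fiber {f : α → ℝ} (hf : Measurable f) (hs : MeasurableSet s)
    (hfin : (f '' s).Finite) {g : α → ℝ} (hg : ∀ y ∈ f '' s, IntegrableOn g (f ⁻¹' {y} ∩ s) μ) :
    ∫ x in s, g x * f x ∂μ = ∑ y ∈ hfin.toFinset, (∫ x in f ⁻¹' {y} ∩ s, g x ∂μ) * y := by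
  have hmeas : ∀ y, MeasurableSet (f ⁻¹' {y} ∩ s) :=
    fun y => (hf (measurableSet_singleton y)).inter hs
  have hfiber : ∀ y, EqOn (fun x => g x * f x) (fun x => g x * y) (f ⁻¹' {y} ∩ s) :=
    fun y x hx => by simp only [show f x = y from hx.1]
  rw [setIntegral_eq_sum_fiber hf hs hfin fun y hy =>
    (integrableOn_congr_fun (hfiber y) (hmeas y)).mpr ((hg y hy).mul_const y)]
  refine Finset.sum_congr rfl fun y _ => ?_
  rw [setIntegral_congr_fun (hmeas y) (hfiber y), integral_mul_const]

theorem setIntegral_union_eq_of_eqOn_average {A B : Set α} {g h : α → ℝ} (hAB : Disjoint A B)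
    (hA : MeasurableSet A) (hB : MeasurableSet B) (hA0 : μ A ≠ 0) (hAfin : μ A ≠ ⊤)
    (hgA : IntegrableOn g A μ) (hgB : IntegrableOn g B μ)
    (hhA : EqOn h (fun _ => ((∫ x in A, g x ∂μ) + ∫ x in B, g x ∂μ) / μ.real A) A)
    (hhB : EqOn h 0 B) :
    IntegrableOn h (A ∪ B) μ ∧ ∫ x in A ∪ B, h x ∂μ = ∫ x in A ∪ B, g x ∂μ := by
  have hhA' : IntegrableOn h A μ := (integrableOn_congr_fun hhA hA).mpr (integrableOn_const hAfin)
  have hhB' : IntegrableOn h B μ := (integrableOn_congr_fun hhB hB).mpr integrableOn_zero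
  have hApos : μ.real A ≠ 0 := (ENNReal.toReal_pos hA0 hAfin).ne'
  refine ⟨hhA'.union hhB', ?_⟩
  rw [setIntegral_union hAB hB hhA' hhB', setIntegral_union hAB hB hgA hgB,
    setIntegral_congr_fun hA hhA, setIntegral_congr_fun hB hhB, setIntegral_const, smul_eq_mul,
    mul_div_cancel₀ _ hApos]
  simp

theorem setIntegral_mul_eq_of_eqOn_fiberAverage {P N : Set α} {f g h : α → ℝ}
    (hf : Measurable f) (hfin : (f '' s).Finite) (hPN : P ∪ N = s) (hdisj : Disjoint P N)
    (hP : MeasurableSet P) (hN : MeasurableSet N)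
    (hs : μ s ≠ ⊤) (hg : IntegrableOn g s μ) (hpos : ∀ y ∈ f '' N, 0 < μ (f ⁻¹' {y} ∩ P))
    (hhP : ∀ x ∈ P \ {x ∈ P | ∃ z ∈ N, f z = f x}, h x = g x)
    (hhM : ∀ x ∈ {x ∈ P | ∃ z ∈ N, f z = f x},
      h x = ((∫ v in f ⁻¹' {f x} ∩ P, g v ∂μ) + ∫ v in f ⁻¹' {f x} ∩ N, g v ∂μ)
        / (μ (f ⁻¹' {f x} ∩ P)).toReal)
    (hhN : ∀ x ∈ N, h x = 0) :
    ∫ x in s, g x * f x ∂μ = ∫ x in s, h x * f x ∂μ := by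
  have hsm : MeasurableSet s := hPN ▸ hP.union hN
  have hfiber : ∀ y ∈ f '' s, IntegrableOn h (f ⁻¹' {y} ∩ s) μ ∧
      ∫ x in f ⁻¹' {y} ∩ s, h x ∂μ = ∫ x in f ⁻¹' {y} ∩ s, g x ∂μ := by
    intro y _
    by_cases hy : y ∈ f '' N
    · rw [← hPN, inter_union_distrib_left]
      obtain ⟨z, hz, rfl⟩ := hy
      refine setIntegral_union_eq_of_eqOn_average
        (hdisj.mono inter_subset_right inter_subset_right)
        ((hf (measurableSet_singleton _)).inter hP) ((hf (measurableSet_singleton _)).inter hN)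
        (hpos _ ⟨z, hz, rfl⟩).ne'
        (measure_ne_top_of_subset (fun x hx => hPN ▸ Or.inl hx.2) hs)
        (hg.mono_set fun x hx => hPN ▸ Or.inl hx.2) (hg.mono_set fun x hx => hPN ▸ Or.inr hx.2)
        (fun x hx => ?_) (fun x hx => hhN x hx.2)
      rw [hhM x ⟨hx.2, z, hz, hx.1.symm⟩, show f x = f z from hx.1]
      rfl
    · have hEq : EqOn h g (f ⁻¹' {y} ∩ s) := fun x hx => by
        have hxN : x ∉ N := fun hxN => hy ⟨x, hxN, hx.1⟩
        refine hhP x ⟨?_, fun ⟨_, z, hz, hzx⟩ => hy ⟨z, hz, hzx.trans hx.1⟩⟩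
        exact (hPN ▸ hx.2 : x ∈ P ∪ N).resolve_right hxN
      have hmeas := (hf (measurableSet_singleton y)).inter hsm
      exact ⟨(integrableOn_congr_fun hEq hmeas).mpr (hg.mono_set inter_subset_right),
        setIntegral_congr_fun hmeas hEq⟩
  rw [setIntegral_mul_eq_sum_fiber hf hsm hfin fun y _ => hg.mono_set inter_subset_right,
    setIntegral_mul_eq_sum_fiber hf hsm hfin fun y hy => (hfiber y hy).1]
  exact Finset.sum_congr rfl fun y hy => by rw [(hfiber y (hfin.mem_toFinset.mp hy)).2]

end LevelSets

/-- Step 2 of the proof of Lemma 2 (discrete case of the general proposition):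
for a finite-range measurable `f`, under the measure dominance condition, the
transformed weight function `ω̃` reproduces the weighted-average estimand and
is nonnegative on `𝒳`. -/
theorem discrete_transformed_weights
    (𝒳 : Set ℝ) (h𝒳 : IsCompact 𝒳) (ω f ωt : ℝ → ℝ)
    (hω : ContinuousOn ω 𝒳) (hf : Measurable f)
    (hfin : (f '' 𝒳).Finite)
    (hLeb : ∀ y ∈ f '' {x ∈ 𝒳 | ω x < 0},
      0 < volume (f ⁻¹' {y} ∩ {x ∈ 𝒳 | 0 ≤ ω x}))
    -- measure dominance condition
    (hdom : ∀ y ∈ f '' {x ∈ 𝒳 | ω x < 0},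
      -∫ v in f ⁻¹' {y} ∩ {x ∈ 𝒳 | ω x < 0}, ω v
        ≤ ∫ v in f ⁻¹' {y} ∩ {x ∈ 𝒳 | 0 ≤ ω x}, ω v)
    -- defining properties of the transformed weights ω̃
    (hωt1 : ∀ x ∈ {x ∈ 𝒳 | 0 ≤ ω x} \
        {x ∈ {x ∈ 𝒳 | 0 ≤ ω x} | ∃ z ∈ {x ∈ 𝒳 | ω x < 0}, f z = f x},
      ωt x = ω x)
    (hωt2 : ∀ x ∈ {x ∈ {x ∈ 𝒳 | 0 ≤ ω x} | ∃ z ∈ {x ∈ 𝒳 | ω x < 0}, f z = f x},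
      ωt x = ((∫ v in f ⁻¹' {f x} ∩ {x ∈ 𝒳 | 0 ≤ ω x}, ω v)
                + ∫ v in f ⁻¹' {f x} ∩ {x ∈ 𝒳 | ω x < 0}, ω v)
              / (volume (f ⁻¹' {f x} ∩ {x ∈ 𝒳 | 0 ≤ ω x})).toReal)
    (hωt3 : ∀ x ∈ {x ∈ 𝒳 | ω x < 0}, ωt x = 0) :
    (∫ x in 𝒳, ω x * f x = ∫ x in 𝒳, ωt x * f x) ∧
    (∀ x ∈ 𝒳, 0 ≤ ωt x) := by
  obtain ⟨hPm, hNm⟩ := hω.measurableSet_sep_le_and_sep_lt (a := 0) h𝒳.isClosed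
  refine ⟨setIntegral_mul_eq_of_eqOn_fiberAverage hf hfin sep_le_union_sep_lt
    disjoint_sep_le_sep_lt hPm hNm h𝒳.measure_lt_top.ne (hω.integrableOn_compact h𝒳)
    hLeb hωt1 hωt2 hωt3, fun x hx => ?_⟩
  by_cases hneg : ω x < 0
  · exact (hωt3 x ⟨hx, hneg⟩).ge
  have hxP : 0 ≤ ω x := not_lt.mp hneg
  by_cases hM : ∃ z ∈ {x ∈ 𝒳 | ω x < 0}, f z = f x
  · obtain ⟨z, hz, hzx⟩ := hM
    rw [hωt2 x ⟨⟨hx, hxP⟩, z, hz, hzx⟩]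
    exact div_nonneg (neg_le_iff_add_nonneg.mp (hdom (f x) ⟨z, hz, hzx⟩)) ENNReal.toReal_nonneg
  · rw [hωt1 x ⟨⟨hx, hxP⟩, fun h => hM h.2⟩]
    exact hxP
end

section
/- Let 𝒳 ⊆ ℝ be compact and let ω : 𝒳 → ℝ and h : 𝒳 → ℝ be continuous (h plays the role of g'). Assume the measure dominance condition: for every Borel set B ⊆ ℝ, −∫_{h⁻¹(B) ∩ 𝒳⁻} ω(v) dv ≤ ∫_{h⁻¹(B) ∩ 𝒳⁺} ω(v) dv. Then for every x ∈ 𝒳ₘ⁺ and every r > 0, setting B_r := h(𝒳 ∩ closedBall(x, r)) (a compact, hence Borel, set), if Leb(h⁻¹(B_r) ∩ 𝒳⁺) > 0 then 0 ≤ [∫_{h⁻¹(B_r) ∩ 𝒳⁺} ω(v) dv + ∫_{h⁻¹(B_r) ∩ 𝒳⁻} ω(v) dv] / Leb(h⁻¹(B_r) ∩ 𝒳⁺) ≤ sup_{x ∈ 𝒳} ω(x). In particular the ratio defining the transformed weights is bounded uniformly in r, and sup_{x ∈ 𝒳} ω(x) is finite by the continuity of ω and the compactness of 𝒳. -/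
open MeasureTheory Set Real

/-!
The numerator splits into the integral of `ω` over the part `P` of the level-matched region
where `ω ≥ 0` and the part `N` where `ω < 0`. Dominance makes the numerator nonnegative, and
dropping the nonpositive integral over `N` bounds it by `∫_P ω ≤ (sup ω) · Leb P`. Continuity
of `g` on the compact `𝒳` makes `B_r` compact, so dominance applies to it and `P`, `N` are
measurable.
-/

section Measurability

variable {α β : Type*} [TopologicalSpace α] [MeasurableSpace α] [OpensMeasurableSpace α]

theorem ContinuousOn.measurableSet_preimage_inter [TopologicalSpace β] {g : α → β}
    {s S : Set α} {t : Set β} (hg : ContinuousOn g s) (hs : IsClosed s) (ht : IsClosed t)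
    (hS : MeasurableSet S) (hSs : S ⊆ s) :
    MeasurableSet (g ⁻¹' t ∩ S) := by
  have hsplit : g ⁻¹' t ∩ S = (s ∩ g ⁻¹' t) ∩ S := by
    rw [inter_comm s, inter_assoc, inter_eq_right.2 hSs]
  rw [hsplit]
  exact (hg.preimage_isClosed_of_isClosed hs ht).measurableSet.inter hS

theorem IsClosed.measurableSet_sep_lt [LinearOrder β] [TopologicalSpace β]
    [OrderClosedTopology β] {f g : α → β} {s : Set α} (hs : IsClosed s)
    (hf : ContinuousOn f s) (hg : ContinuousOn g s) :
    MeasurableSet {x ∈ s | f x < g x} := by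
  have hcompl : {x ∈ s | f x < g x} = s \ {x ∈ s | g x ≤ f x} := by
    ext x
    simp only [mem_sep_iff, mem_sdiff, not_and, not_le]
    exact ⟨fun h => ⟨h.1, fun _ => h.2⟩, fun h => ⟨h.1, h.2 h.1⟩⟩
  rw [hcompl]
  exact hs.measurableSet.diff (hs.isClosed_le hg hf).measurableSet

end Measurability

section Integrals

variable {X : Type*} [MeasurableSpace X] {μ : Measure X} {f : X → ℝ} {s P N : Set X} {M : ℝ}

theorem setIntegral_le_of_le_const_real (hs : MeasurableSet s) (hμs : μ s ≠ ⊤)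
    (hf : ∀ x ∈ s, f x ≤ M) (hfint : IntegrableOn f s μ) :
    ∫ x in s, f x ∂μ ≤ M * μ.real s := by
  simpa [mul_comm] using setIntegral_mono_on hfint (integrableOn_const hμs) hs hf

theorem setIntegral_add_div_measureReal_mem_Icc (hP : MeasurableSet P) (hN : MeasurableSet N)
    (hμP : μ P ≠ ⊤) (hμP_pos : 0 < μ P) (hfP : IntegrableOn f P μ)
    (hfM : ∀ x ∈ P, f x ≤ M) (hfN : ∀ x ∈ N, f x ≤ 0)
    (hdom : -∫ x in N, f x ∂μ ≤ ∫ x in P, f x ∂μ) :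
    (∫ x in P, f x ∂μ + ∫ x in N, f x ∂μ) / μ.real P ∈ Icc 0 M := by
  have hvol : 0 < μ.real P := ENNReal.toReal_pos hμP_pos.ne' hμP
  have hN_nonpos : ∫ x in N, f x ∂μ ≤ 0 := setIntegral_nonpos hN hfN
  have hP_le : ∫ x in P, f x ∂μ ≤ M * μ.real P :=
    setIntegral_le_of_le_const_real hP hμP hfM hfP
  constructor
  · exact div_nonneg (by linarith) hvol.le
  · rw [div_le_iff₀ hvol]
    linarith

end Integrals

/-- Step 1 of the proof of Lemma 2: under the measure dominance condition (for
all Borel sets), the ratio defining the transformed weights at any matched point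
`x ∈ 𝒳ₘ⁺` and radius `r > 0` lies between `0` and `sup_{x ∈ 𝒳} ω(x)`, and the
supremum is finite (`ω '' 𝒳` is bounded above) by continuity and compactness. -/
theorem transformed_weight_ratio_bounds
    (𝒳 : Set ℝ) (hcomp : IsCompact 𝒳) (ω g : ℝ → ℝ)
    (hω : ContinuousOn ω 𝒳) (hg : ContinuousOn g 𝒳)
    -- measure dominance condition for every Borel set B
    (hdom : ∀ B : Set ℝ, MeasurableSet B →
      -∫ v in g ⁻¹' B ∩ {x ∈ 𝒳 | ω x < 0}, ω v
        ≤ ∫ v in g ⁻¹' B ∩ {x ∈ 𝒳 | 0 ≤ ω x}, ω v) :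
    BddAbove (ω '' 𝒳) ∧
    ∀ x ∈ {x ∈ {x ∈ 𝒳 | 0 ≤ ω x} | ∃ z ∈ {x ∈ 𝒳 | ω x < 0}, g z = g x},
      ∀ r > (0:ℝ),
        0 < volume (g ⁻¹' (g '' (𝒳 ∩ Metric.closedBall x r)) ∩ {x ∈ 𝒳 | 0 ≤ ω x}) →
          0 ≤ ((∫ v in g ⁻¹' (g '' (𝒳 ∩ Metric.closedBall x r)) ∩ {x ∈ 𝒳 | 0 ≤ ω x}, ω v)
                + ∫ v in g ⁻¹' (g '' (𝒳 ∩ Metric.closedBall x r)) ∩ {x ∈ 𝒳 | ω x < 0}, ω v)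
              / (volume (g ⁻¹' (g '' (𝒳 ∩ Metric.closedBall x r)) ∩ {x ∈ 𝒳 | 0 ≤ ω x})).toReal ∧
          ((∫ v in g ⁻¹' (g '' (𝒳 ∩ Metric.closedBall x r)) ∩ {x ∈ 𝒳 | 0 ≤ ω x}, ω v)
                + ∫ v in g ⁻¹' (g '' (𝒳 ∩ Metric.closedBall x r)) ∩ {x ∈ 𝒳 | ω x < 0}, ω v)
              / (volume (g ⁻¹' (g '' (𝒳 ∩ Metric.closedBall x r)) ∩ {x ∈ 𝒳 | 0 ≤ ω x})).toReal
            ≤ sSup (ω '' 𝒳) := by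
  have hbdd : BddAbove (ω '' 𝒳) := (hcomp.image_of_continuousOn hω).bddAbove
  refine ⟨hbdd, fun x _ r _ hpos => ?_⟩
  have hB : IsCompact (g '' (𝒳 ∩ Metric.closedBall x r)) :=
    (hcomp.inter_right Metric.isClosed_closedBall).image_of_continuousOn
      (hg.mono inter_subset_left)
  have hnonneg : IsClosed {v ∈ 𝒳 | 0 ≤ ω v} := hcomp.isClosed.isClosed_le continuousOn_const hω
  have hneg : MeasurableSet {v ∈ 𝒳 | ω v < 0} :=
    hcomp.isClosed.measurableSet_sep_lt hω continuousOn_const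
  have hP𝒳 : g ⁻¹' (g '' (𝒳 ∩ Metric.closedBall x r)) ∩ {v ∈ 𝒳 | 0 ≤ ω v} ⊆ 𝒳 :=
    inter_subset_right.trans (sep_subset _ _)
  exact setIntegral_add_div_measureReal_mem_Icc
    (hg.measurableSet_preimage_inter hcomp.isClosed hB.isClosed hnonneg.measurableSet
      (sep_subset _ _))
    (hg.measurableSet_preimage_inter hcomp.isClosed hB.isClosed hneg (sep_subset _ _))
    (measure_ne_top_of_subset hP𝒳 hcomp.measure_lt_top.ne) hpos
    ((hω.integrableOn_compact hcomp).mono_set hP𝒳)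
    (fun v hv => le_csSup hbdd ⟨v, hP𝒳 hv, rfl⟩) (fun v hv => hv.2.2.le)
    (hdom _ hB.measurableSet)
end
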